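/- For the Gilbert–Moore construction, the values rᵢ = ∑_{j<i} pⱼ + pᵢ/2 satisfy: for all i < j, |rⱼ − rᵢ| ≥ (pᵢ + pⱼ)/2, and consequently truncating the binary expansion of rᵢ to ⌈−log₂ pᵢ⌉ + 1 bits yields n binary strings that are pairwise non-prefix and strictly increasing in lexicographic order. -/

import Mathlib

/-- No codeword is a prefix of another. -/
def PrefixFree {n : ℕ} (w : Fin n → List Bool) : Prop :=
  ∀ i j : Fin n, i ≠ j → ¬ (w i <+: w j)

/-- The codewords are strictly increasing in the lexicographic order on binary strings. -/
def LexIncreasing {n : ℕ} (w : Fin n → List Bool) : Prop :=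
  ∀ i j : Fin n, i < j → List.Lex (· < ·) (w i) (w j)

/-- A binary alphabetic code: prefix-free and lexicographically increasing codewords. -/
def IsAlphabeticCode {n : ℕ} (w : Fin n → List Bool) : Prop :=
  PrefixFree w ∧ LexIncreasing w


/-- The first m bits of the binary expansion of x (the k-th bit is ⌊2ᵏx⌋ mod 2). -/
noncomputable def bitsOf (m : ℕ) (x : ℝ) : List Bool :=
  (List.range m).map fun k => decide (⌊(2 : ℝ) ^ (k + 1) * x⌋ % 2 = 1)

namespace GMaux

lemma floor_div_nat (x : ℝ) (n : ℕ) (hn : 0 < n) : ⌊x / (n : ℝ)⌋ = ⌊x⌋ / (n : ℤ) := by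
  have hn' : (0 : ℝ) < (n : ℝ) := by exact_mod_cast hn
  have hnz : (0 : ℤ) < (n : ℤ) := by exact_mod_cast hn
  apply le_antisymm
  · rw [Int.le_ediv_iff_mul_le hnz, Int.le_floor]
    push_cast
    rw [← le_div_iff₀ hn']
    exact Int.floor_le _
  · rw [Int.le_floor]
    rw [le_div_iff₀ hn']
    calc ((⌊x⌋ / (n : ℤ) : ℤ) : ℝ) * n = ((⌊x⌋ / (n : ℤ) * (n : ℤ) : ℤ) : ℝ) := by push_cast; ring
      _ ≤ (⌊x⌋ : ℝ) := by exact_mod_cast Int.ediv_mul_le _ hnz.ne'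
      _ ≤ x := Int.floor_le x

lemma floor_pow_floor (x : ℝ) (m t : ℕ) :
    ⌊(2 : ℝ) ^ m * x⌋ = ⌊(2 : ℝ) ^ (m + t) * x⌋ / ((2 : ℤ) ^ t) := by
  have h : (2 : ℝ) ^ m * x = ((2 : ℝ) ^ (m + t) * x) / (((2 ^ t : ℕ) : ℝ)) := by
    push_cast
    rw [pow_add]
    field_simp
  rw [h, floor_div_nat _ _ (by positivity)]
  norm_num

lemma bitsOf_length (m : ℕ) (x : ℝ) : (bitsOf m x).length = m := by simp [bitsOf]

lemma bitsOf_succ (m : ℕ) (x : ℝ) :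
    bitsOf (m + 1) x = bitsOf m x ++ [decide (⌊(2 : ℝ) ^ (m + 1) * x⌋ % 2 = 1)] := by
  simp [bitsOf, List.range_succ]

lemma bitsOf_congr {m : ℕ} {x y : ℝ} (h : ⌊(2 : ℝ) ^ m * x⌋ = ⌊(2 : ℝ) ^ m * y⌋) :
    bitsOf m x = bitsOf m y := by
  unfold bitsOf
  apply List.map_congr_left
  intro k hk
  rw [List.mem_range] at hk
  have hx := floor_pow_floor x (k + 1) (m - (k + 1))
  have hy := floor_pow_floor y (k + 1) (m - (k + 1))
  rw [Nat.add_sub_cancel' hk] at hx hy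
  rw [hx, hy, h]

lemma bitsOf_prefix {m m' : ℕ} (h : m ≤ m') (x : ℝ) : bitsOf m x <+: bitsOf m' x := by
  unfold bitsOf
  refine List.IsPrefix.map _ ?_
  rw [show List.range m = (List.range m').take m by rw [List.take_range, Nat.min_eq_left h]]
  exact List.take_prefix _ _

lemma lex_append_of_lex {r : Bool → Bool → Prop} {l₁ l₂ : List Bool}
    (h : List.Lex r l₁ l₂) : l₁.length = l₂.length →
    ∀ s t : List Bool, List.Lex r (l₁ ++ s) (l₂ ++ t) := by
  induction h with
  | nil => intro hlen; simp at hlen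
  | rel h => intro _ s t; exact .rel h
  | cons h ih => intro hlen s t; exact .cons (ih (by simpa using hlen) s t)

lemma lex_snoc {r : Bool → Bool → Prop} {a b : Bool} (hab : r a b) :
    ∀ l : List Bool, List.Lex r (l ++ [a]) (l ++ [b])
  | [] => .rel hab
  | _ :: l => .cons (lex_snoc hab l)

lemma not_lex_self : ∀ l : List Bool, ¬ List.Lex (· < ·) l l
  | [], h => by cases h
  | a :: l, h => by
      cases h with
      | rel h => exact absurd h (lt_irrefl a)
      | cons h => exact not_lex_self l h

lemma lex_of_lex_append {r : Bool → Bool → Prop} :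
    ∀ {u v : List Bool} (s t : List Bool), ¬ (v <+: u) →
      List.Lex r (u ++ s) (v ++ t) → List.Lex r u v
  | u, [], _, _, hp, _ => absurd (List.nil_prefix) hp
  | [], _ :: _, _, _, _, _ => .nil
  | a :: u, b :: v, s, t, hp, h => by
      cases h with
      | rel h => exact .rel h
      | cons h =>
          exact .cons (lex_of_lex_append s t
            (fun hpre => hp (List.cons_prefix_cons.mpr ⟨rfl, hpre⟩)) h)

lemma lex_bitsOf {x y : ℝ} (hx0 : 0 ≤ x) (hx1 : x < 1) (hy0 : 0 ≤ y) (hy1 : y < 1) :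
    ∀ {M : ℕ}, ⌊(2 : ℝ) ^ M * x⌋ < ⌊(2 : ℝ) ^ M * y⌋ →
      List.Lex (· < ·) (bitsOf M x) (bitsOf M y) := by
  intro M
  induction M with
  | zero =>
      intro h
      rw [pow_zero, one_mul, one_mul] at h
      rw [Int.floor_eq_zero_iff.mpr ⟨hx0, hx1⟩, Int.floor_eq_zero_iff.mpr ⟨hy0, hy1⟩] at h
      exact absurd h (lt_irrefl 0)
  | succ M ih =>
      intro h
      have hhx := floor_pow_floor x M 1
      have hhy := floor_pow_floor y M 1
      norm_num at hhx hhy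
      have hle : ⌊(2 : ℝ) ^ M * x⌋ ≤ ⌊(2 : ℝ) ^ M * y⌋ := by
        rw [hhx, hhy]; exact Int.ediv_le_ediv (by norm_num) h.le
      rcases lt_or_eq_of_le hle with hlt | heq
      · rw [bitsOf_succ, bitsOf_succ]
        exact lex_append_of_lex (ih hlt) (by simp [bitsOf_length]) _ _
      · have hmods : ⌊(2 : ℝ) ^ (M + 1) * x⌋ % 2 = 0 ∧ ⌊(2 : ℝ) ^ (M + 1) * y⌋ % 2 = 1 := by
          rw [hhx, hhy] at heq; omega
        rw [bitsOf_succ, bitsOf_succ, bitsOf_congr heq]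
        have e1 : decide (⌊(2 : ℝ) ^ (M + 1) * x⌋ % 2 = 1) = false := by simp [hmods.1]
        have e2 : decide (⌊(2 : ℝ) ^ (M + 1) * y⌋ % 2 = 1) = true := by simp [hmods.2]
        rw [e1, e2]
        exact lex_snoc (by decide) _

lemma floor_lt_floor_of_gap {x y : ℝ} (t : ℕ) (h : x + ((2 : ℝ) ^ t)⁻¹ ≤ y) :
    ⌊(2 : ℝ) ^ t * x⌋ < ⌊(2 : ℝ) ^ t * y⌋ := by
  have h2 : (0 : ℝ) < 2 ^ t := by positivity
  have hle : (2 : ℝ) ^ t * x + 1 ≤ 2 ^ t * y := by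
    have := mul_le_mul_of_nonneg_left h h2.le
    rw [mul_add, mul_inv_cancel₀ h2.ne'] at this
    linarith
  have := Int.floor_le_floor hle
  rw [Int.floor_add_one] at this
  omega

end GMaux

open GMaux in
/-- Correctness of the Gilbert–Moore construction: the midpoints rᵢ are pairwise at
distance at least (pᵢ+pⱼ)/2, and truncating their binary expansions to
⌈−log₂ pᵢ⌉ + 1 bits yields a prefix-free, lexicographically increasing code. -/
theorem gilbert_moore_correctness (n : ℕ) (p : Fin n → ℝ) (hp : ∀ i, 0 < p i)
    (hsum : ∑ i, p i = 1) (r : Fin n → ℝ)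
    (hr : ∀ i, r i = (∑ j ∈ Finset.Iio i, p j) + p i / 2) :
    (∀ i j : Fin n, i < j → (p i + p j) / 2 ≤ r j - r i) ∧
      IsAlphabeticCode (fun i => bitsOf ((⌈-Real.logb 2 (p i)⌉).toNat + 1) (r i)) := by
  set m : Fin n → ℕ := fun i => (⌈-Real.logb 2 (p i)⌉).toNat + 1 with hm
  set w : Fin n → List Bool := fun i => bitsOf (m i) (r i) with hw
  -- part 1: the gap bound
  have gap : ∀ i j : Fin n, i < j → (p i + p j) / 2 ≤ r j - r i := by
    intro i j hij
    have hsub : insert i (Finset.Iio i) ⊆ Finset.Iio j := by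
      intro k hk
      simp only [Finset.mem_insert, Finset.mem_Iio] at *
      rcases hk with rfl | hk
      · exact hij
      · exact hk.trans hij
    have hsum2 : ∑ k ∈ Finset.Iio i, p k + p i ≤ ∑ k ∈ Finset.Iio j, p k := by
      have := Finset.sum_le_sum_of_subset_of_nonneg hsub (fun k _ _ => (hp k).le)
      rw [Finset.sum_insert (by simp)] at this
      linarith
    rw [hr i, hr j]; linarith
  -- basic bounds
  have hple : ∀ i, p i ≤ 1 := by
    intro i
    rw [← hsum]
    exact Finset.single_le_sum (fun k _ => (hp k).le) (Finset.mem_univ i)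
  have hpow : ∀ i, ((2 : ℝ) ^ (m i))⁻¹ ≤ p i / 2 := by
    intro i
    set t := (⌈-Real.logb 2 (p i)⌉).toNat with ht
    have h1 : -Real.logb 2 (p i) ≤ (t : ℝ) := by
      refine le_trans (Int.le_ceil _) ?_
      exact_mod_cast Int.self_le_toNat _
    have h2 : (2 : ℝ) ^ (-(t : ℝ)) ≤ (2 : ℝ) ^ (Real.logb 2 (p i)) :=
      Real.rpow_le_rpow_of_exponent_le one_le_two (by linarith)
    rw [Real.rpow_logb two_pos (by norm_num) (hp i)] at h2
    rw [Real.rpow_neg (by norm_num), Real.rpow_natCast] at h2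
    have hmt : m i = t + 1 := rfl
    rw [hmt, pow_succ]
    rw [mul_inv]
    have hpos : (0 : ℝ) < ((2 : ℝ) ^ t)⁻¹ := by positivity
    calc ((2 : ℝ) ^ t)⁻¹ * 2⁻¹ = ((2 : ℝ) ^ t)⁻¹ / 2 := by ring
      _ ≤ p i / 2 := by linarith
  have hr0 : ∀ i, 0 ≤ r i := by
    intro i
    rw [hr i]
    have : (0 : ℝ) ≤ ∑ j ∈ Finset.Iio i, p j := Finset.sum_nonneg fun k _ => (hp k).le
    linarith [hp i]
  have hr1 : ∀ i, r i < 1 := by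
    intro i
    have hs : ∑ k ∈ Finset.Iio i, p k + p i ≤ 1 := by
      have h := Finset.sum_le_sum_of_subset_of_nonneg
        (Finset.subset_univ (insert i (Finset.Iio i))) (fun k _ _ => (hp k).le)
      rw [Finset.sum_insert (show i ∉ Finset.Iio i by simp)] at h
      linarith
    rw [hr i]
    linarith [hp i]
  have hgap2 : ∀ i j : Fin n, i < j →
      r i + (((2 : ℝ) ^ (m i))⁻¹ + ((2 : ℝ) ^ (m j))⁻¹) ≤ r j := by
    intro i j hij
    have := gap i j hij
    have h1 := hpow i
    have h2 := hpow j
    linarith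
  -- prefix-freeness
  have hpf : PrefixFree w := by
    intro i j hne hpre
    have hlen : m i ≤ m j := by
      have := hpre.length_le
      simpa [hw, bitsOf_length] using this
    have hbits_eq : bitsOf (m i) (r j) = bitsOf (m i) (r i) := by
      have h1 : bitsOf (m i) (r j) <+: bitsOf (m j) (r j) := bitsOf_prefix hlen _
      have h2 : bitsOf (m i) (r i) <+: bitsOf (m j) (r j) := hpre
      exact (List.prefix_of_prefix_length_le h1 h2
        (by rw [bitsOf_length, bitsOf_length])).eq_of_length
        (by rw [bitsOf_length, bitsOf_length])
    rcases hne.lt_or_gt with h | h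
    · have hfl : ⌊(2 : ℝ) ^ (m i) * r i⌋ < ⌊(2 : ℝ) ^ (m i) * r j⌋ := by
        apply floor_lt_floor_of_gap
        have := hgap2 i j h
        have : (0 : ℝ) < ((2 : ℝ) ^ (m j))⁻¹ := by positivity
        linarith [hgap2 i j h]
      have hlx := lex_bitsOf (hr0 i) (hr1 i) (hr0 j) (hr1 j) hfl
      rw [hbits_eq] at hlx
      exact not_lex_self _ hlx
    · have hfl : ⌊(2 : ℝ) ^ (m i) * r j⌋ < ⌊(2 : ℝ) ^ (m i) * r i⌋ := by
        apply floor_lt_floor_of_gap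
        have := hgap2 j i h
        have : (0 : ℝ) < ((2 : ℝ) ^ (m j))⁻¹ := by positivity
        linarith [hgap2 j i h]
      have hlx := lex_bitsOf (hr0 j) (hr1 j) (hr0 i) (hr1 i) hfl
      rw [hbits_eq] at hlx
      exact not_lex_self _ hlx
  -- lexicographic increase
  have hlex : LexIncreasing w := by
    intro i j hij
    set M := max (m i) (m j) with hM
    have hMi : ((2 : ℝ) ^ M)⁻¹ ≤ ((2 : ℝ) ^ (m i))⁻¹ := by
      apply inv_anti₀ (by positivity)
      exact pow_le_pow_right₀ one_le_two (le_max_left _ _)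
    have hfl : ⌊(2 : ℝ) ^ M * r i⌋ < ⌊(2 : ℝ) ^ M * r j⌋ := by
      apply floor_lt_floor_of_gap
      have h1 := hgap2 i j hij
      have h2 : (0 : ℝ) < ((2 : ℝ) ^ (m j))⁻¹ := by positivity
      linarith
    have hlx := lex_bitsOf (hr0 i) (hr1 i) (hr0 j) (hr1 j) hfl
    obtain ⟨s, hs⟩ := bitsOf_prefix (le_max_left (m i) (m j)) (r i)
    obtain ⟨t, ht⟩ := bitsOf_prefix (le_max_right (m i) (m j)) (r j)
    rw [← hs, ← ht] at hlx
    exact lex_of_lex_append s t (hpf j i (ne_of_gt hij)) hlx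
  exact ⟨gap, hpf, hlex⟩
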